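/- arXiv:math/0410124 — 2 statements merged into one kernel-verified Lean document; each statement's English description precedes it below -/
import Mathlib

section
/- The number of k-negative paths of length 2n is independent of k: for all k with 0 ≤ k < n, the number of paths from (0,0) to (2n,0) with steps (1,1),(1,-1) having exactly 2k steps below the x-axis equals the number having exactly 2(k+1) steps below the x-axis. -/
def stepVal (b : Bool) : ℤ := if b then 1 else -1

def psum {m : ℕ} (f : Fin m → Bool) (p : ℕ) : ℤ :=
  (((List.ofFn f).take p).map stepVal).sum

def belowSteps {m : ℕ} (f : Fin m → Bool) : Finset (Fin m) :=
  Finset.univ.filter fun i => min (psum f i.1) (psum f (i.1 + 1)) < 0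

/-!
A path of length `m` is a list of `m` booleans, `true` for an up-step. A returning path that is
not entirely below the axis splits uniquely as `a ++ true :: (reflect B ++ false :: c)`: `a` is its
longest initial part weakly below the axis, `a` and `B` are negative Dyck paths, and
`true :: reflect B ++ [false]` is the first excursion above the axis. Moving that excursion to the
front gives `reflect B ++ false :: (a ++ true :: c)`; there `a` runs one level lower, so all its
steps stay below, and the two steps around it are now below as well: the number of steps below
grows by exactly two. Reflection in the axis exchanges steps below and steps weakly above, and the
reflected image splits the same way with the roles of `a` and `B` exchanged, so applying the move
to the reflection and reflecting back inverts it (Chung–Feller).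
-/

namespace ChungFeller

def height (l : List Bool) : ℤ := (l.map stepVal).sum

@[simp] lemma height_nil : height [] = 0 := rfl

@[simp] lemma height_cons (b : Bool) (l : List Bool) : height (b :: l) = stepVal b + height l :=
  rfl

@[simp] lemma height_append (x y : List Bool) : height (x ++ y) = height x + height y := by
  simp [height]

def reflect (l : List Bool) : List Bool := l.map not

@[simp] lemma reflect_nil : reflect [] = [] := rfl

@[simp] lemma reflect_cons (b : Bool) (l : List Bool) : reflect (b :: l) = (!b) :: reflect l := rfl

@[simp] lemma reflect_append (x y : List Bool) : reflect (x ++ y) = reflect x ++ reflect y :=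
  List.map_append

@[simp] lemma length_reflect (l : List Bool) : (reflect l).length = l.length := List.length_map _

@[simp] lemma reflect_reflect (l : List Bool) : reflect (reflect l) = l := by
  simp [reflect, Function.comp_def]

@[simp] lemma take_reflect (j : ℕ) (l : List Bool) : (reflect l).take j = reflect (l.take j) :=
  (List.map_take ..).symm

@[simp] lemma height_reflect (l : List Bool) : height (reflect l) = -height l := by
  induction l with
  | nil => rfl
  | cons b l ih => cases b <;> simp [ih, stepVal] <;> ring

def belowCount : ℤ → List Bool → ℕ
  | _, [] => 0
  | h, b :: l => (if min h (h + stepVal b) < 0 then 1 else 0) + belowCount (h + stepVal b) l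

@[simp] lemma belowCount_nil (h : ℤ) : belowCount h [] = 0 := rfl

lemma belowCount_cons (h : ℤ) (b : Bool) (l : List Bool) :
    belowCount h (b :: l) =
      (if min h (h + stepVal b) < 0 then 1 else 0) + belowCount (h + stepVal b) l :=
  rfl

lemma belowCount_append (x y : List Bool) (h : ℤ) :
    belowCount h (x ++ y) = belowCount h x + belowCount (h + height x) y := by
  induction x generalizing h with
  | nil => simp
  | cons b x ih => simp only [List.cons_append, belowCount_cons, ih, height_cons, add_assoc]

lemma belowCount_reflect (l : List Bool) (h : ℤ) :
    belowCount (-h) (reflect l) + belowCount h l = l.length := by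
  induction l generalizing h with
  | nil => rfl
  | cons b l ih =>
    -- of a step and its mirror image, exactly one lies below the axis
    have ih' := ih (h + stepVal b)
    cases b <;> simp only [reflect_cons, belowCount_cons, stepVal] at ih' ⊢ <;> grind

lemma belowCount_le_length (l : List Bool) (h : ℤ) : belowCount h l ≤ l.length := by
  have := belowCount_reflect l h
  omega

lemma belowCount_eq_length_of_nonpos {h : ℤ} {l : List Bool}
    (hl : ∀ j, h + height (l.take j) ≤ 0) :
    belowCount h l = l.length := by
  induction l generalizing h with
  | nil => rfl
  | cons b l ih =>
    have h₀ : h ≤ 0 := by simpa using hl 0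
    have h₁ : h + stepVal b ≤ 0 := by simpa using hl 1
    have hbelow : min h (h + stepVal b) < 0 := by cases b <;> simp [stepVal] at h₁ ⊢ <;> omega
    rw [belowCount_cons, if_pos hbelow, ih fun j => by simpa [add_assoc] using hl (j + 1)]
    simp [add_comm]

lemma belowCount_eq_zero_of_nonneg {h : ℤ} {l : List Bool}
    (hl : ∀ j, 0 ≤ h + height (l.take j)) :
    belowCount h l = 0 := by
  have := belowCount_reflect l h
  rw [belowCount_eq_length_of_nonpos fun j => by simp; linarith [hl j], length_reflect] at this
  omega

/-- `splitAtRise h l = (a, r)` with `l = a ++ true :: r`, where this `true` is the first up-step of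
`l` from the axis when `l` starts at height `h`; if there is none, the result is `(l, [])`. -/
def splitAtRise : ℤ → List Bool → List Bool × List Bool
  | _, [] => ([], [])
  | h, b :: l =>
    if h = 0 ∧ b = true then ([], l)
    else (b :: (splitAtRise (h + stepVal b) l).1, (splitAtRise (h + stepVal b) l).2)

lemma splitAtRise_append {h : ℤ} {a : List Bool} (r : List Bool)
    (ha : ∀ j, h + height (a.take j) ≤ 0) (ha' : h + height a = 0) :
    splitAtRise h (a ++ true :: r) = (a, r) := by
  induction a generalizing h with
  | nil => simp_all [splitAtRise]
  | cons b a ih =>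
    have hrise : ¬(h = 0 ∧ b = true) := by
      rintro ⟨rfl, rfl⟩
      simpa [stepVal] using ha 1
    rw [List.cons_append, splitAtRise, if_neg hrise,
      ih (fun j => by simpa [add_assoc] using ha (j + 1)) (by simpa [add_assoc] using ha')]

lemma exists_eq_append_rise {h : ℤ} {l : List Bool} (hh : h ≤ 0)
    (hl : ∃ j, 0 < h + height (l.take j)) :
    ∃ a r, l = a ++ true :: r ∧ (∀ j, h + height (a.take j) ≤ 0) ∧ h + height a = 0 := by
  induction l generalizing h with
  | nil => simp at hl; omega
  | cons b l ih =>
    by_cases hrise : h = 0 ∧ b = true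
    · obtain ⟨rfl, rfl⟩ := hrise
      exact ⟨[], l, rfl, by simp, rfl⟩
    obtain ⟨_ | j, hj⟩ := hl
    · simp at hj; omega
    · have hh' : h + stepVal b ≤ 0 := by cases b <;> simp [stepVal] at hrise ⊢ <;> omega
      obtain ⟨a, r, rfl, ha, ha'⟩ := ih hh' ⟨j, by simpa [add_assoc] using hj⟩
      refine ⟨b :: a, r, rfl, fun j => ?_, by simpa [add_assoc] using ha'⟩
      cases j with
      | zero => simpa using hh
      | succ j => simpa [add_assoc] using ha j

def IsNegDyck (a : List Bool) : Prop := height a = 0 ∧ ∀ j, height (a.take j) ≤ 0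

def swapExcursions (l : List Bool) : List Bool :=
  let s := splitAtRise 0 (reflect (splitAtRise 0 l).2)
  reflect s.1 ++ false :: ((splitAtRise 0 l).1 ++ true :: reflect s.2)

lemma splitAtRise_of_isNegDyck {a : List Bool} (ha : IsNegDyck a) (r : List Bool) :
    splitAtRise 0 (a ++ true :: r) = (a, r) :=
  splitAtRise_append r (by simpa using ha.2) (by simpa using ha.1)

lemma swapExcursions_eq {a B : List Bool} (ha : IsNegDyck a) (hB : IsNegDyck B) (c : List Bool) :
    swapExcursions (a ++ true :: (reflect B ++ false :: c)) =
      reflect B ++ false :: (a ++ true :: c) := by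
  simp [swapExcursions, splitAtRise_of_isNegDyck ha, splitAtRise_of_isNegDyck hB]

lemma exists_isNegDyck_decomposition {l : List Bool} (hl : height l = 0)
    (hb : belowCount 0 l < l.length) :
    ∃ a B c, IsNegDyck a ∧ IsNegDyck B ∧ l = a ++ true :: (reflect B ++ false :: c) := by
  have hpos : ∃ j, 0 < 0 + height (l.take j) := by
    by_contra! hneg
    exact hb.ne (belowCount_eq_length_of_nonpos hneg)
  obtain ⟨a, r, rfl, ha, ha'⟩ := exists_eq_append_rise le_rfl hpos
  have hr : height (reflect r) = 1 := by simp [stepVal] at hl ha' ⊢; omega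
  obtain ⟨B, c, hBc, hB, hB'⟩ :=
    exists_eq_append_rise (l := reflect r) le_rfl ⟨r.length, by simp [hr]⟩
  refine ⟨a, B, reflect c, ⟨by simpa using ha', by simpa using ha⟩,
    ⟨by simpa using hB', by simpa using hB⟩, ?_⟩
  rw [← reflect_reflect r, hBc]
  simp

lemma IsNegDyck.belowCount_eq_length {a : List Bool} (ha : IsNegDyck a) {h : ℤ} (hh : h ≤ 0) :
    belowCount h a = a.length :=
  belowCount_eq_length_of_nonpos fun j => by linarith [ha.2 j]

lemma IsNegDyck.belowCount_reflect_eq_zero {B : List Bool} (hB : IsNegDyck B) {h : ℤ}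
    (hh : 0 ≤ h) : belowCount h (reflect B) = 0 :=
  belowCount_eq_zero_of_nonneg fun j => by simp; linarith [hB.2 j]

section Decomposed

variable {a B : List Bool}

lemma belowCount_decomposition (ha : IsNegDyck a) (hB : IsNegDyck B) (c : List Bool) :
    belowCount 0 (a ++ true :: (reflect B ++ false :: c)) = a.length + belowCount 0 c := by
  simp [belowCount_append, belowCount_cons, ha.belowCount_eq_length, hB.belowCount_reflect_eq_zero,
    ha.1, hB.1, stepVal]

lemma belowCount_swapExcursions (ha : IsNegDyck a) (hB : IsNegDyck B) (c : List Bool) :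
    belowCount 0 (swapExcursions (a ++ true :: (reflect B ++ false :: c))) =
      a.length + belowCount 0 c + 2 := by
  simp [swapExcursions_eq ha hB, belowCount_append, belowCount_cons, ha.belowCount_eq_length,
    hB.belowCount_reflect_eq_zero, ha.1, hB.1, stepVal]
  omega

lemma swapExcursions_reflect_swapExcursions (ha : IsNegDyck a) (hB : IsNegDyck B)
    (c : List Bool) :
    swapExcursions (reflect (swapExcursions (a ++ true :: (reflect B ++ false :: c)))) =
      reflect (a ++ true :: (reflect B ++ false :: c)) := by
  have hreflect : reflect (reflect B ++ false :: (a ++ true :: c)) =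
      B ++ true :: (reflect a ++ false :: reflect c) := by simp
  rw [swapExcursions_eq ha hB, hreflect, swapExcursions_eq hB ha]
  simp

end Decomposed

/-- `bridges m (2 * k)` is the set `S_k` of paths of length `m`. -/
def bridges (m j : ℕ) : Set (List Bool) :=
  {l | l.length = m ∧ height l = 0 ∧ belowCount 0 l = j}

def unswapExcursions (l : List Bool) : List Bool := reflect (swapExcursions (reflect l))

lemma mapsTo_swapExcursions {m j : ℕ} (hj : j < m) :
    Set.MapsTo swapExcursions (bridges m j) (bridges m (j + 2)) := by
  rintro l ⟨hm, hl, rfl⟩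
  obtain ⟨a, B, c, ha, hB, rfl⟩ := exists_isNegDyck_decomposition hl (by omega)
  refine ⟨?_, ?_, ?_⟩
  · rw [swapExcursions_eq ha hB, ← hm]; simp; omega
  · rw [swapExcursions_eq ha hB]; simpa [stepVal, ha.1, hB.1] using hl
  · rw [belowCount_swapExcursions ha hB, belowCount_decomposition ha hB]

lemma swapExcursions_reflect_swapExcursions_of_lt {l : List Bool} (hl : height l = 0)
    (hb : belowCount 0 l < l.length) : swapExcursions (reflect (swapExcursions l)) = reflect l := by
  obtain ⟨a, B, c, ha, hB, rfl⟩ := exists_isNegDyck_decomposition hl hb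
  exact swapExcursions_reflect_swapExcursions ha hB c

lemma reflect_mem_bridges {m j : ℕ} {l : List Bool} (hl : l ∈ bridges m j) :
    reflect l ∈ bridges m (m - j) := by
  obtain ⟨hm, hl, rfl⟩ := hl
  have hcount := belowCount_reflect l 0
  refine ⟨by simpa using hm, by simpa using hl, ?_⟩
  rw [neg_zero] at hcount
  omega

lemma mapsTo_unswapExcursions (m j : ℕ) :
    Set.MapsTo unswapExcursions (bridges m (j + 2)) (bridges m j) := by
  intro l hl
  have hjm : j + 2 ≤ m := hl.1 ▸ hl.2.2 ▸ belowCount_le_length l 0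
  have hmem := reflect_mem_bridges (mapsTo_swapExcursions (by omega) (reflect_mem_bridges hl))
  rwa [show m - (m - (j + 2) + 2) = j by omega] at hmem

lemma invOn_unswapExcursions {m j : ℕ} (hj : j < m) :
    Set.InvOn unswapExcursions swapExcursions (bridges m j) (bridges m (j + 2)) := by
  constructor
  · rintro l ⟨hm, hl, rfl⟩
    rw [unswapExcursions, swapExcursions_reflect_swapExcursions_of_lt hl (by omega),
      reflect_reflect]
  · intro l hl
    obtain ⟨hm, hl', hb⟩ := reflect_mem_bridges hl
    rw [unswapExcursions, swapExcursions_reflect_swapExcursions_of_lt hl' (by omega),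
      reflect_reflect]

lemma ncard_bridges_add_two {m j : ℕ} (hj : j < m) :
    (bridges m j).ncard = (bridges m (j + 2)).ncard :=
  ((invOn_unswapExcursions hj).bijOn (mapsTo_swapExcursions hj)
    (mapsTo_unswapExcursions m j)).ncard_eq

lemma belowCount_eq_sum (l : List Bool) (h : ℤ) :
    belowCount h l = ∑ j ∈ Finset.range l.length,
      if min (h + height (l.take j)) (h + height (l.take (j + 1))) < 0 then 1 else 0 := by
  induction l generalizing h with
  | nil => rfl
  | cons b l ih =>
    rw [List.length_cons, Finset.sum_range_succ', belowCount_cons, ih, add_comm]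
    simp [add_assoc]

lemma card_belowSteps {m : ℕ} (f : Fin m → Bool) :
    (belowSteps f).card = belowCount 0 (List.ofFn f) := by
  rw [belowSteps, Finset.card_filter, belowCount_eq_sum, List.length_ofFn,
    ← Fin.sum_univ_eq_sum_range]
  simp only [zero_add]
  rfl

lemma card_filter_ofFn_mem {α : Type*} [Fintype α] {m : ℕ} (s : Set (List α))
    [DecidablePred (· ∈ s)] (hs : ∀ l ∈ s, l.length = m) :
    (Finset.univ.filter fun f : Fin m → α => List.ofFn f ∈ s).card = s.ncard := by
  classical
  rw [← Finset.card_image_of_injective _ List.ofFn_injective, ← Set.ncard_coe_finset]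
  congr
  ext l
  simp only [Finset.coe_image, Finset.coe_filter, Finset.mem_univ, true_and, Set.mem_image,
    Set.mem_ofPred_eq]
  refine ⟨fun ⟨f, hf, hfl⟩ => hfl ▸ hf, fun hl => ?_⟩
  obtain rfl := hs l hl
  exact ⟨fun i => l[i], by simpa using hl, List.ofFn_getElem⟩

lemma psum_eq_height {m : ℕ} (f : Fin m → Bool) : psum f m = height (List.ofFn f) := by
  rw [psum, List.take_of_length_le (by simp), height]

lemma card_filter_eq_ncard_bridges (m j : ℕ) :
    (Finset.univ.filter fun f : Fin m → Bool => psum f m = 0 ∧ (belowSteps f).card = j).card =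
      (bridges m j).ncard := by
  classical
  rw [← card_filter_ofFn_mem (bridges m j) fun l hl => hl.1]
  congr 1
  refine Finset.filter_congr fun f _ => ?_
  simp [bridges, card_belowSteps, psum_eq_height]

end ChungFeller

open ChungFeller in
/-- The number of k-negative paths of length 2n is independent of k: for 0 ≤ k < n,
the number of paths from (0,0) to (2n,0) with exactly 2k steps below the x-axis
equals the number with exactly 2(k+1) steps below the x-axis. -/
theorem card_S_k_eq_card_S_succ (n k : ℕ) (hk : k < n) :
    ((Finset.univ : Finset (Fin (2 * n) → Bool)).filter fun f =>
        psum f (2 * n) = 0 ∧ (belowSteps f).card = 2 * k).card =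
    ((Finset.univ : Finset (Fin (2 * n) → Bool)).filter fun f =>
        psum f (2 * n) = 0 ∧ (belowSteps f).card = 2 * (k + 1)).card := by
  rw [card_filter_eq_ncard_bridges, card_filter_eq_ncard_bridges]
  exact ncard_bridges_add_two (by omega)
end

section
/- Every path σ in S_{k+1} (k+1 ≥ 1) admits a unique factorization σ = π·d·Ω·u·ρ where d·Ω·u is the last negative prime Dyck subpath of σ (Ω a negative Dyck path) and ρ is a Dyck path (nonnegative path). -/
def IsStepSeq (s : List ℤ) : Prop := ∀ a ∈ s, a = 1 ∨ a = -1

def psumL (s : List ℤ) (p : ℕ) : ℤ := (s.take p).sum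

def IsDyck (s : List ℤ) : Prop := IsStepSeq s ∧ s.sum = 0 ∧ ∀ p, 0 ≤ psumL s p

def IsNegDyck (s : List ℤ) : Prop := IsStepSeq s ∧ s.sum = 0 ∧ ∀ p, psumL s p ≤ 0

def belowCountL (s : List ℤ) : ℕ :=
  ((Finset.range s.length).filter fun i => min (psumL s i) (psumL s (i + 1)) < 0).card

def IsKNeg (n k : ℕ) (s : List ℤ) : Prop :=
  IsStepSeq s ∧ s.length = 2 * n ∧ s.sum = 0 ∧ belowCountL s = 2 * k

lemma psumL_add (s : List ℤ) (a q : ℕ) :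
    psumL s (a + q) = psumL s a + ((s.drop a).take q).sum := by
  unfold psumL
  rw [List.take_add, List.sum_append]

lemma psumL_succ (s : List ℤ) (p : ℕ) (hp : p < s.length) :
    psumL s (p + 1) = psumL s p + s[p] := by
  unfold psumL
  rw [List.take_succ, List.sum_append]
  simp [List.getElem?_eq_getElem hp]

lemma psumL_of_length_le (s : List ℤ) (p : ℕ) (h : s.length ≤ p) :
    psumL s p = s.sum := by
  unfold psumL; rw [List.take_of_length_le h]

lemma psumL_take (s : List ℤ) (a b p : ℕ) :
    psumL ((s.drop a).take b) p = psumL s (a + min p b) - psumL s a := by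
  have h := psumL_add s a (min p b)
  have h2 : ((s.drop a).take b).take p = (s.drop a).take (min p b) := List.take_take ..
  unfold psumL at h ⊢
  rw [h2]
  omega

lemma psumL_length (s : List ℤ) : psumL s s.length = s.sum := psumL_of_length_le s _ le_rfl

lemma psumL_append_left (l r : List ℤ) (p : ℕ) (h : p ≤ l.length) :
    psumL (l ++ r) p = psumL l p := by
  unfold psumL; rw [List.take_append_of_le_length h]

/-- Every σ ∈ S_{k+1} factors uniquely as σ = π·d·Ω·u·ρ where d·Ω·u is the last
negative prime Dyck subpath (Ω a negative Dyck path), π is a path ending at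
height 0, and ρ is a (nonnegative) Dyck path. -/
theorem S_succ_factorization (n k : ℕ) (σ : List ℤ) (hσ : IsKNeg n (k + 1) σ) :
    ∃! t : List ℤ × List ℤ × List ℤ,
      IsStepSeq t.1 ∧ t.1.sum = 0 ∧ IsNegDyck t.2.1 ∧ IsDyck t.2.2 ∧
      σ = t.1 ++ (-1) :: (t.2.1 ++ 1 :: t.2.2) := by
  obtain ⟨hstep, hlen, hsum, hbc⟩ := hσ
  have hstep' : ∀ p (hp : p < σ.length), σ[p] = 1 ∨ σ[p] = -1 := fun p hp =>
    hstep _ (List.getElem_mem hp)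
  -- there is a position with negative partial sum
  have hex : ∃ p, p ≤ σ.length ∧ psumL σ p < 0 := by
    have hne : (((Finset.range σ.length).filter
        fun i => min (psumL σ i) (psumL σ (i + 1)) < 0)).Nonempty := by
      apply Finset.card_pos.mp
      unfold belowCountL at hbc
      omega
    obtain ⟨i, hi⟩ := hne
    simp only [Finset.mem_filter, Finset.mem_range] at hi
    rcases min_lt_iff.mp hi.2 with h | h
    · exact ⟨i, le_of_lt hi.1, h⟩
    · exact ⟨i + 1, hi.1, h⟩
  obtain ⟨p0, hp0le, hp0⟩ := hex
  classical
  set m : ℕ := Nat.findGreatest (fun p => psumL σ p < 0) σ.length with hm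
  have hPm : psumL σ m < 0 := by
    rw [hm]; exact Nat.findGreatest_spec (P := fun p => psumL σ p < 0) hp0le hp0
  have hmlen : m ≤ σ.length := Nat.findGreatest_le _
  have hmlt : m < σ.length := by
    rcases lt_or_eq_of_le hmlen with h | h
    · exact h
    · exfalso; rw [h, psumL_length, hsum] at hPm; omega
  have h_after : ∀ p, m < p → 0 ≤ psumL σ p := by
    intro p hp
    by_cases hple : p ≤ σ.length
    · have h := Nat.findGreatest_is_greatest (P := fun p => psumL σ p < 0)
        (by rw [← hm]; exact hp) hple
      exact not_lt.mp h
    · rw [psumL_of_length_le σ p (by omega), hsum]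
  have hsm := psumL_succ σ m hmlt
  have hgm := hstep' m hmlt
  have h_after_m1 : 0 ≤ psumL σ (m + 1) := h_after _ (Nat.lt_succ_self m)
  have hσm : σ[m] = 1 := by
    rcases hgm with h | h
    · exact h
    · rw [h] at hsm; omega
  have hpsm : psumL σ m = -1 := by rw [hσm] at hsm; omega
  have hpsm1 : psumL σ (m + 1) = 0 := by omega
  set l : ℕ := Nat.findGreatest (fun p => 0 ≤ psumL σ p) m with hl
  have hQl : 0 ≤ psumL σ l := by
    rw [hl]
    exact Nat.findGreatest_spec (P := fun p => 0 ≤ psumL σ p) (Nat.zero_le m)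
      (by simp [psumL])
  have hllem : l ≤ m := Nat.findGreatest_le _
  have hlm : l < m := by
    rcases lt_or_eq_of_le hllem with h | h
    · exact h
    · exfalso; rw [h] at hQl; omega
  have hbet : ∀ p, l < p → p ≤ m → psumL σ p < 0 := by
    intro p h1 h2
    have h := Nat.findGreatest_is_greatest (P := fun p => 0 ≤ psumL σ p)
      (by rw [← hl]; exact h1) h2
    exact not_le.mp h
  have hsl := psumL_succ σ l (lt_of_lt_of_le hlm (le_of_lt hmlt))
  have hgl := hstep' l (lt_of_lt_of_le hlm (le_of_lt hmlt))
  have hpl1 : psumL σ (l + 1) < 0 := hbet _ (Nat.lt_succ_self l) hlm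
  have hσl : σ[l] = -1 := by
    rcases hgl with h | h
    · rw [h] at hsl; omega
    · exact h
  have hpsl : psumL σ l = 0 := by rw [hσl] at hsl; omega
  have hpsl1 : psumL σ (l + 1) = -1 := by omega
  -- the witness
  set Ω : List ℤ := (σ.drop (l + 1)).take (m - (l + 1)) with hΩdef
  set π : List ℤ := σ.take l with hπdef
  set ρ : List ℤ := σ.drop (m + 1) with hρdef
  have hdecomp : σ = π ++ (-1) :: (Ω ++ 1 :: ρ) := by
    conv_lhs => rw [← List.take_append_drop l σ]
    rw [List.drop_eq_getElem_cons (lt_of_lt_of_le hlm (le_of_lt hmlt)), hσl]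
    congr 1
    congr 1
    conv_lhs => rw [← List.take_append_drop (m - (l + 1)) (σ.drop (l + 1))]
    rw [List.drop_drop]
    have h9 : l + 1 + (m - (l + 1)) = m := by omega
    rw [h9, List.drop_eq_getElem_cons hmlt, hσm]
  have hΩsum : Ω.sum = 0 := by
    have h := psumL_add σ (l + 1) (m - (l + 1))
    have h2 : l + 1 + (m - (l + 1)) = m := by omega
    rw [h2] at h
    rw [hΩdef]; omega
  have hΩle : ∀ p, psumL Ω p ≤ 0 := by
    intro p
    rw [hΩdef, psumL_take]
    have hq : min p (m - (l + 1)) ≤ m - (l + 1) := min_le_right ..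
    have h1 : psumL σ (l + 1 + min p (m - (l + 1))) < 0 :=
      hbet _ (by omega) (by omega)
    omega
  have hρsum : ρ.sum = 0 := by
    have h := psumL_add σ (m + 1) (σ.length - (m + 1))
    have h2 : m + 1 + (σ.length - (m + 1)) = σ.length := by omega
    rw [h2, psumL_length, hsum] at h
    have h3 : (σ.drop (m + 1)).take (σ.length - (m + 1)) = σ.drop (m + 1) :=
      List.take_of_length_le (by simp)
    rw [h3] at h
    rw [hρdef]; omega
  have hρge : ∀ p, 0 ≤ psumL ρ p := by
    intro p
    have h : ρ = (σ.drop (m + 1)).take (σ.length - (m + 1)) :=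
      (List.take_of_length_le (by rw [hρdef]; simp)).symm
    rw [h, psumL_take]
    have h1 : 0 ≤ psumL σ (m + 1 + min p (σ.length - (m + 1))) := h_after _ (by omega)
    omega
  have hπsum : π.sum = 0 := by rw [hπdef]; exact hpsl
  have hπstep : IsStepSeq π := fun a ha => hstep a (List.mem_of_mem_take ha)
  have hΩstep : IsStepSeq Ω := fun a ha =>
    hstep a (List.mem_of_mem_drop (List.mem_of_mem_take ha))
  have hρstep : IsStepSeq ρ := fun a ha => hstep a (List.mem_of_mem_drop ha)
  refine ⟨(π, Ω, ρ), ⟨hπstep, hπsum, ⟨hΩstep, hΩsum, hΩle⟩, ⟨hρstep, hρsum, hρge⟩, hdecomp⟩, ?_⟩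
  -- uniqueness
  rintro ⟨π', Ω', ρ'⟩ ⟨hπ'step, hπ'sum, ⟨hΩ'step, hΩ'sum, hΩ'le⟩, ⟨hρ'step, hρ'sum, hρ'ge⟩, heq⟩
  simp only at heq hπ'step hπ'sum hΩ'step hΩ'sum hΩ'le hρ'step hρ'sum hρ'ge ⊢
  set l' : ℕ := π'.length with hl'
  set m' : ℕ := l' + 1 + Ω'.length with hm'
  have hps_pi : psumL σ l' = 0 := by
    rw [heq, psumL_append_left _ _ _ le_rfl, psumL_length, hπ'sum]
  have hps_mid : ∀ q, q ≤ Ω'.length → psumL σ (l' + (1 + q)) = -1 + psumL Ω' q := by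
    intro q hq
    rw [heq, psumL_add, List.drop_left]
    have he1 : (1 : ℕ) + q = q + 1 := by omega
    rw [he1, List.take_succ_cons, List.take_append_of_le_length hq,
      psumL_append_left _ _ _ le_rfl, psumL_length, hπ'sum]
    simp [psumL]
  set A : List ℤ := π' ++ (-1) :: Ω' with hA
  have heq2 : σ = A ++ 1 :: ρ' := by
    rw [heq, hA]; simp
  have hlenA : A.length = m' := by
    rw [hA]; simp [hm', hl']; omega
  have hAsum : A.sum = -1 := by
    rw [hA]; simp [hπ'sum, hΩ'sum]
  have hps_m' : psumL σ m' = -1 := by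
    rw [heq2, ← hlenA, psumL_append_left _ _ _ le_rfl, psumL_length, hAsum]
  have hps_after : ∀ q, psumL σ (m' + (1 + q)) = psumL ρ' q := by
    intro q
    rw [heq2, ← hlenA, psumL_add, List.drop_left]
    have he1 : (1 : ℕ) + q = q + 1 := by omega
    rw [he1, List.take_succ_cons, psumL_append_left _ _ _ le_rfl, psumL_length, hAsum]
    simp [psumL]
  have hlen' : σ.length = m' + 1 + ρ'.length := by
    rw [heq2, List.length_append, hlenA, List.length_cons]; omega
  have hm'm : m' = m := by
    have h1 : m' ≤ m := by
      rw [hm]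
      exact Nat.le_findGreatest (P := fun p => psumL σ p < 0) (by omega)
        (show psumL σ m' < 0 by omega)
    by_contra hne
    have h2 : m' < m := lt_of_le_of_ne h1 hne
    have h3 : m = m' + (1 + (m - m' - 1)) := by omega
    have h4 := hps_after (m - m' - 1)
    rw [← h3] at h4
    have h5 := hρ'ge (m - m' - 1)
    omega
  have hl'l : l' = l := by
    have h1 : l' ≤ l := by
      rw [hl]
      exact Nat.le_findGreatest (P := fun p => 0 ≤ psumL σ p) (by omega)
        (show 0 ≤ psumL σ l' by omega)
    by_contra hne
    have h2 : l' < l := lt_of_le_of_ne h1 hne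
    have hq : l - l' - 1 ≤ Ω'.length := by omega
    have h3 : l = l' + (1 + (l - l' - 1)) := by omega
    have h4 := hps_mid (l - l' - 1) hq
    rw [← h3] at h4
    have h5 := hΩ'le (l - l' - 1)
    omega
  have hπeq : π' = π := by
    have h : σ.take l' = π' := by rw [heq, hl', List.take_left]
    rw [hπdef, ← hl'l, h]
  have hΩeq : Ω' = Ω := by
    have hd : σ.drop (l' + 1) = Ω' ++ 1 :: ρ' := by
      rw [heq]
      have h6 : l' + 1 = (π' ++ [(-1 : ℤ)]).length := by simp [hl']
      have h5 : π' ++ (-1) :: (Ω' ++ 1 :: ρ') = (π' ++ [(-1 : ℤ)]) ++ (Ω' ++ 1 :: ρ') := by simp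
      rw [h6, h5, List.drop_left]
    have hml : m - (l + 1) = Ω'.length := by omega
    rw [hΩdef, hml, ← hl'l, hd, List.take_left]
  have hρeq : ρ' = ρ := by
    have hd : σ.drop (m' + 1) = ρ' := by
      rw [heq2]
      have h6 : m' + 1 = (A ++ [(1 : ℤ)]).length := by simp [hlenA]
      have h5 : A ++ 1 :: ρ' = (A ++ [(1 : ℤ)]) ++ ρ' := by simp
      rw [h6, h5, List.drop_left]
    rw [hρdef, ← hm'm, hd]
  rw [hπeq, hΩeq, hρeq]
end
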